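/- Let G be a finite group, T a positive integer, 0 < δ ≤ 1/|G|, and γ > 0. Let s(t), t = 0,1,2,..., be arbitrary vectors of convex weights on G and let p(t+1) = s(t) ∗ p(t) from an arbitrary initial vector of convex weights p(t₀) at some time t₀. Suppose there exists an integer N with √|G|·(1 − |G|δ)^N < γ such that for every i = 0,1,...,N−1 the composite weights q(t₀+iT, T) = s(t₀+iT+T−1) ∗ ⋯ ∗ s(t₀+iT) satisfy q(t₀+iT,T)(g) ≥ δ for all g ∈ G. Then ‖p(t) − p̂‖ < γ for all t ≥ t₀ + N·T, regardless of the (arbitrary) convex weight vectors s(t) applied after time t₀ + N·T, where p̂(g) = 1/|G| and ‖·‖ is the Euclidean norm. -/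

import Mathlib

/-!
Writing the block weights as `q = δ + (q - δ)` with `q - δ ≥ 0` of total mass `1 - |G|δ`, and using
that the left translates of `p - p̂` sum to zero, one gets
`q ∗ p - p̂ = ∑ h, (q h - δ) • (p (h⁻¹ * ·) - p̂)`.
Translation preserves the Euclidean norm, so the triangle inequality contracts `‖p - p̂‖` by the
factor `1 - |G|δ` over every block with `q ≥ δ`; for arbitrary convex weights (`δ = 0`) it does not
grow. Starting from `‖p - p̂‖ ≤ √|G|`, after `N` good blocks it is below `√|G| (1 - |G|δ)^N < γ`.
-/

def IsConvexWeights {G : Type*} [Fintype G] (s : G → ℝ) : Prop :=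
  (∀ g, 0 ≤ s g) ∧ ∑ g, s g = 1

def groupConv {G : Type*} [Group G] [Fintype G] (s p : G → ℝ) : G → ℝ :=
  fun g => ∑ h : G, s h * p (h⁻¹ * g)

def compWeights {G : Type*} [Group G] [Fintype G] [DecidableEq G]
    (s : ℕ → G → ℝ) (t : ℕ) : ℕ → G → ℝ
  | 0 => fun g => if g = 1 then 1 else 0
  | T + 1 => groupConv (s (t + T)) (compWeights s t T)

section Convolution

variable {G : Type*} [Group G] [Fintype G]

lemma sum_comp_inv_mul {M : Type*} [AddCommMonoid M] (f : G → M) (g : G) :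
    ∑ h, f (h⁻¹ * g) = ∑ h, f h :=
  ((Equiv.inv G).trans (Equiv.mulRight g)).sum_comp f

lemma sum_comp_mul_left {M : Type*} [AddCommMonoid M] (f : G → M) (g : G) :
    ∑ h, f (g * h) = ∑ h, f h :=
  Equiv.sum_comp (Equiv.mulLeft g) f

lemma sum_groupConv (s p : G → ℝ) : ∑ g, groupConv s p g = (∑ h, s h) * ∑ g, p g := by
  simp only [groupConv]
  rw [Finset.sum_comm, Finset.sum_mul]
  exact Finset.sum_congr rfl fun h _ => by rw [← Finset.mul_sum, sum_comp_mul_left (p ·) h⁻¹]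

lemma groupConv_assoc (a b c : G → ℝ) :
    groupConv (groupConv a b) c = groupConv a (groupConv b c) := by
  funext g
  simp only [groupConv, Finset.sum_mul, Finset.mul_sum]
  rw [Finset.sum_comm]
  refine Finset.sum_congr rfl fun h _ => ?_
  rw [← sum_comp_mul_left _ h]
  simp [mul_assoc]

lemma IsConvexWeights.groupConv {s p : G → ℝ} (hs : IsConvexWeights s)
    (hp : IsConvexWeights p) : IsConvexWeights (groupConv s p) :=
  ⟨fun _ => Finset.sum_nonneg fun h _ => mul_nonneg (hs.1 h) (hp.1 _),
    by rw [sum_groupConv, hs.2, hp.2, one_mul]⟩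

end Convolution

section Evolution

variable {G : Type*} [Group G] [Fintype G] {s : ℕ → G → ℝ} {p : ℕ → G → ℝ} {t₀ : ℕ}

lemma isConvexWeights_of_step (hs : ∀ t, IsConvexWeights (s t))
    (hp0 : IsConvexWeights (p t₀)) (hstep : ∀ t, t₀ ≤ t → p (t + 1) = groupConv (s t) (p t))
    {t : ℕ} (ht : t₀ ≤ t) : IsConvexWeights (p t) := by
  induction t, ht using Nat.le_induction with
  | base => exact hp0
  | succ t ht ih => exact hstep t ht ▸ (hs t).groupConv ih

variable [DecidableEq G]

lemma groupConv_compWeights_zero (t : ℕ) (q : G → ℝ) :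
    groupConv (compWeights s t 0) q = q := by
  funext g
  simp [groupConv, compWeights]

lemma IsConvexWeights.compWeights (hs : ∀ t, IsConvexWeights (s t)) (t : ℕ) :
    ∀ T, IsConvexWeights (compWeights s t T)
  | 0 => ⟨fun g => by by_cases hg : g = 1 <;> simp [_root_.compWeights, hg], by
      simp [_root_.compWeights]⟩
  | T + 1 => (hs _).groupConv (IsConvexWeights.compWeights hs t T)

lemma eq_groupConv_compWeights (hstep : ∀ t, t₀ ≤ t → p (t + 1) = groupConv (s t) (p t))
    {t : ℕ} (ht : t₀ ≤ t) : ∀ k, p (t + k) = groupConv (compWeights s t k) (p t)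
  | 0 => (groupConv_compWeights_zero t _).symm
  | k + 1 => by
    rw [← add_assoc, hstep _ (ht.trans (Nat.le_add_right t k)),
      eq_groupConv_compWeights hstep ht k, ← groupConv_assoc]
    rfl

end Evolution

section Deviation

variable {G : Type*} [Fintype G]

noncomputable def uniformDeviation (p : G → ℝ) : EuclideanSpace ℝ G :=
  WithLp.toLp 2 fun g => p g - 1 / Fintype.card G

lemma norm_uniformDeviation (p : G → ℝ) :
    ‖uniformDeviation p‖ = √(∑ g, (p g - 1 / Fintype.card G) ^ 2) := by
  simp [EuclideanSpace.norm_eq, uniformDeviation]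

lemma norm_uniformDeviation_le_sqrt_card {p : G → ℝ} (hp : IsConvexWeights p) :
    ‖uniformDeviation p‖ ≤ √(Fintype.card G) := by
  rw [norm_uniformDeviation]
  refine Real.sqrt_le_sqrt ((Finset.sum_le_card_nsmul _ _ 1 fun g _ => ?_).trans (by simp))
  have hcard : (1 : ℝ) ≤ Fintype.card G := by exact_mod_cast Fintype.card_pos_iff.2 ⟨g⟩
  have hpg : p g ≤ 1 := hp.2 ▸ Finset.single_le_sum (fun h _ => hp.1 h) (Finset.mem_univ g)
  have hinv : 1 / (Fintype.card G : ℝ) ≤ 1 := (div_le_one (by linarith)).2 hcard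
  have hinv0 : 0 ≤ 1 / (Fintype.card G : ℝ) := by positivity
  nlinarith [hp.1 g]

variable [Group G]

lemma norm_uniformDeviation_comp_inv_mul (p : G → ℝ) (h : G) :
    ‖uniformDeviation (fun g => p (h⁻¹ * g))‖ = ‖uniformDeviation p‖ := by
  simp only [norm_uniformDeviation]
  rw [sum_comp_mul_left (fun g => (p g - 1 / Fintype.card G) ^ 2) h⁻¹]

lemma uniformDeviation_groupConv {q p : G → ℝ} (hq : ∑ g, q g = 1) (hp : ∑ g, p g = 1) (δ : ℝ) :
    uniformDeviation (groupConv q p) =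
      ∑ h, (q h - δ) • uniformDeviation (fun g => p (h⁻¹ * g)) := by
  have hcard : (Fintype.card G : ℝ) ≠ 0 := by exact_mod_cast Fintype.card_ne_zero
  ext g
  simp only [uniformDeviation, groupConv, WithLp.ofLp_sum, WithLp.ofLp_smul, Finset.sum_apply,
    Pi.smul_apply, smul_eq_mul, mul_sub, sub_mul, Finset.sum_sub_distrib, ← Finset.sum_mul,
    ← Finset.mul_sum, hq, sum_comp_inv_mul p g, hp, Finset.sum_const, Finset.card_univ,
    nsmul_eq_mul]
  field_simp
  ring

lemma norm_uniformDeviation_groupConv_le {q p : G → ℝ} {δ : ℝ} (hqδ : ∀ g, δ ≤ q g)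
    (hq : ∑ g, q g = 1) (hp : ∑ g, p g = 1) :
    ‖uniformDeviation (groupConv q p)‖ ≤ (1 - Fintype.card G * δ) * ‖uniformDeviation p‖ :=
  calc ‖uniformDeviation (groupConv q p)‖
      ≤ ∑ h, ‖(q h - δ) • uniformDeviation (fun g => p (h⁻¹ * g))‖ := by
        rw [uniformDeviation_groupConv hq hp δ]
        exact norm_sum_le _ _
    _ = ∑ h, (q h - δ) * ‖uniformDeviation p‖ := by
        refine Finset.sum_congr rfl fun h _ => ?_
        rw [norm_smul, Real.norm_of_nonneg (sub_nonneg.2 (hqδ h)),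
          norm_uniformDeviation_comp_inv_mul]
    _ = (1 - Fintype.card G * δ) * ‖uniformDeviation p‖ := by
        rw [← Finset.sum_mul, Finset.sum_sub_distrib, hq, Finset.sum_const, Finset.card_univ,
          nsmul_eq_mul]

end Deviation

section Contraction

variable {G : Type*} [Group G] [Fintype G] {s : ℕ → G → ℝ} {p : ℕ → G → ℝ} {t₀ : ℕ}

lemma norm_uniformDeviation_antitone (hs : ∀ t, IsConvexWeights (s t))
    (hp0 : IsConvexWeights (p t₀)) (hstep : ∀ t, t₀ ≤ t → p (t + 1) = groupConv (s t) (p t))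
    {t t' : ℕ} (ht : t₀ ≤ t) (htt' : t ≤ t') :
    ‖uniformDeviation (p t')‖ ≤ ‖uniformDeviation (p t)‖ := by
  induction t', htt' using Nat.le_induction with
  | base => rfl
  | succ t' htt' ih =>
    have ht' := ht.trans htt'
    calc ‖uniformDeviation (p (t' + 1))‖
        ≤ (1 - Fintype.card G * 0) * ‖uniformDeviation (p t')‖ := by
          rw [hstep t' ht']
          exact norm_uniformDeviation_groupConv_le (hs t').1 (hs t').2
            (isConvexWeights_of_step hs hp0 hstep ht').2
      _ ≤ ‖uniformDeviation (p t)‖ := by simpa using ih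

lemma norm_uniformDeviation_add_le [DecidableEq G] (hs : ∀ t, IsConvexWeights (s t))
    (hp0 : IsConvexWeights (p t₀)) (hstep : ∀ t, t₀ ≤ t → p (t + 1) = groupConv (s t) (p t))
    {t T : ℕ} (ht : t₀ ≤ t) {δ : ℝ} (hqδ : ∀ g, δ ≤ compWeights s t T g) :
    ‖uniformDeviation (p (t + T))‖ ≤ (1 - Fintype.card G * δ) * ‖uniformDeviation (p t)‖ := by
  rw [eq_groupConv_compWeights hstep ht]
  exact norm_uniformDeviation_groupConv_le hqδ (IsConvexWeights.compWeights hs t T).2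
    (isConvexWeights_of_step hs hp0 hstep ht).2

lemma norm_uniformDeviation_blocks_le [DecidableEq G] (hs : ∀ t, IsConvexWeights (s t))
    (hp0 : IsConvexWeights (p t₀)) (hstep : ∀ t, t₀ ≤ t → p (t + 1) = groupConv (s t) (p t))
    {T : ℕ} {δ : ℝ} (hc : 0 ≤ 1 - Fintype.card G * δ) :
    ∀ {N : ℕ}, (∀ i < N, ∀ g, δ ≤ compWeights s (t₀ + i * T) T g) →
      ‖uniformDeviation (p (t₀ + N * T))‖ ≤
        (1 - Fintype.card G * δ) ^ N * ‖uniformDeviation (p t₀)‖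
  | 0, _ => by simp
  | N + 1, hq =>
    calc ‖uniformDeviation (p (t₀ + (N + 1) * T))‖
        ≤ (1 - Fintype.card G * δ) * ‖uniformDeviation (p (t₀ + N * T))‖ := by
          rw [add_mul, one_mul, ← add_assoc]
          exact norm_uniformDeviation_add_le hs hp0 hstep (Nat.le_add_right _ _)
            (hq N N.lt_succ_self)
      _ ≤ (1 - Fintype.card G * δ) *
            ((1 - Fintype.card G * δ) ^ N * ‖uniformDeviation (p t₀)‖) := by
          gcongr
          exact norm_uniformDeviation_blocks_le hs hp0 hstep hc fun i hi =>
            hq i (hi.trans N.lt_succ_self)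
      _ = (1 - Fintype.card G * δ) ^ (N + 1) * ‖uniformDeviation (p t₀)‖ := by ring

end Contraction

theorem once_close_always_close_general
    {G : Type*} [Group G] [Fintype G] [DecidableEq G]
    (T : ℕ)
    (δ : ℝ) (hδ1 : δ ≤ 1 / (Fintype.card G : ℝ))
    (γ : ℝ)
    (s : ℕ → G → ℝ) (hs : ∀ t, IsConvexWeights (s t))
    (t₀ : ℕ) (p : ℕ → G → ℝ) (hp0 : IsConvexWeights (p t₀))
    (hstep : ∀ t, t₀ ≤ t → p (t + 1) = groupConv (s t) (p t))
    (N : ℕ)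
    (hN : Real.sqrt (Fintype.card G) * (1 - (Fintype.card G : ℝ) * δ) ^ N < γ)
    (hq : ∀ i < N, ∀ g : G, δ ≤ compWeights s (t₀ + i * T) T g) :
    ∀ t : ℕ, t₀ + N * T ≤ t →
      Real.sqrt (∑ g : G, (p t g - 1 / (Fintype.card G : ℝ)) ^ 2) < γ := by
  have hcard : (0 : ℝ) < Fintype.card G := by exact_mod_cast Fintype.card_pos
  have hc : 0 ≤ 1 - (Fintype.card G : ℝ) * δ := sub_nonneg.2 ((le_div_iff₀' hcard).1 hδ1)
  intro t ht
  rw [← norm_uniformDeviation]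
  calc ‖uniformDeviation (p t)‖
      ≤ ‖uniformDeviation (p (t₀ + N * T))‖ :=
        norm_uniformDeviation_antitone hs hp0 hstep (Nat.le_add_right _ _) ht
    _ ≤ (1 - Fintype.card G * δ) ^ N * ‖uniformDeviation (p t₀)‖ :=
        norm_uniformDeviation_blocks_le hs hp0 hstep hc hq
    _ ≤ (1 - Fintype.card G * δ) ^ N * √(Fintype.card G) := by
        gcongr
        exact norm_uniformDeviation_le_sqrt_card hp0
    _ < γ := by rw [mul_comm]; exact hN

theorem once_close_always_close
    {G : Type*} [Group G] [Fintype G] [DecidableEq G]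
    (T : ℕ) (hT : 0 < T)
    (δ : ℝ) (hδ0 : 0 < δ) (hδ1 : δ ≤ 1 / (Fintype.card G : ℝ))
    (γ : ℝ) (hγ : 0 < γ)
    (s : ℕ → G → ℝ) (hs : ∀ t, IsConvexWeights (s t))
    (t₀ : ℕ) (p : ℕ → G → ℝ) (hp0 : IsConvexWeights (p t₀))
    (hstep : ∀ t, t₀ ≤ t → p (t + 1) = groupConv (s t) (p t))
    (N : ℕ)
    (hN : Real.sqrt (Fintype.card G) * (1 - (Fintype.card G : ℝ) * δ) ^ N < γ)
    (hq : ∀ i < N, ∀ g : G, δ ≤ compWeights s (t₀ + i * T) T g) :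
    ∀ t : ℕ, t₀ + N * T ≤ t →
      Real.sqrt (∑ g : G, (p t g - 1 / (Fintype.card G : ℝ)) ^ 2) < γ :=
  once_close_always_close_general T δ hδ1 γ s hs t₀ p hp0 hstep N hN hq
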